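/- Uniform bound transfer for decomposed processes (Step 3 of the proof of Theorem 3.1): Assume (HD). Let Y be defined on [0,T] by Y_t = Y^0_t·1_{t < τ_1} + Σ_{k=1}^n Y^k_t(τ_{(k)}, ζ_{(k)})·1_{τ_k ≤ t < τ_{k+1}}, where each Y^k is a càdlàg 𝒫ℳ(F,Δ_k,E^k)-measurable process. If M := sup over k ∈ {0,…,n} and (θ,e) ∈ Δ_n×E^n of ess sup_{t∈[θ_k∧T, T]} |Y^k_t(θ_{(k)}, e_{(k)})| is finite, then P-almost surely |Y_t| ≤ (n+1)M for all t ∈ [0,T]; in particular ‖Y‖_{S^∞[0,T]} := ess sup_{t∈[0,T]} |Y_t| ≤ (n+1)M. -/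

import Mathlib

/-!
For fixed parameters `(θ, e)`, each `Y^k(θ, e)` is a.s. bounded by `M` on `[θ_k ∧ T, T]`; the
point is to substitute the random parameters `(τ, ζ)`. By (HD) at time `T`, the joint law of
`ω ↦ (ω, (τ, ζ)(ω))` on `F_T ⊗ B` is `γ_T · (P|_{F_T} ⊗ dθ de)`, so a set in `F_T ⊗ B` whose
`ω`-sections are all `P`-null is almost surely avoided. Progressive measurability makes the
exceptional set of `Y^k` belong to `F_T ⊗ B` once time runs through the countable set
`(ℚ ∩ [0, T]) ∪ {T}`, and right-continuity recovers all times. Each of the `n + 1` pieces of `Y`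
is then bounded by `M`.
-/

open MeasureTheory Set
open scoped ENNReal NNReal

noncomputable section

namespace PaperBSDEJumps

variable {Ω : Type*}

/-- The predictable σ-algebra `𝒫(F)` on `ℝ × Ω`: the σ-algebra generated by the
left-continuous `F`-adapted real-valued processes. -/
def predSigma (F : ℝ → MeasurableSpace Ω) : MeasurableSpace (ℝ × Ω) :=
  ⨆ X : {X : ℝ × Ω → ℝ //
      (∀ ω : Ω, ∀ t : ℝ, ContinuousWithinAt (fun s => X (s, ω)) (Set.Iic t) t) ∧
      ∀ t : ℝ, Measurable[F t] fun ω => X (t, ω)},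
    MeasurableSpace.comap X.1 inferInstance

/-- The progressive σ-algebra `𝒫ℳ(F)` on `ℝ × Ω`: a set is progressively measurable iff for
every `s ≥ 0` its restriction to `[0,s] × Ω` is `B([0,s]) ⊗ F_s`-measurable. -/
def progSigma (F : ℝ → MeasurableSpace Ω) : MeasurableSpace (ℝ × Ω) :=
  ⨅ s : ℝ, MeasurableSpace.map (fun p : Set.Icc (0 : ℝ) s × Ω => ((p.1 : ℝ), p.2))
    (MeasurableSpace.prod inferInstance (F s))

/-- `𝒫(F) ⊗ B(α)`-measurability for a parameterized process. -/
def PredParamMeas (F : ℝ → MeasurableSpace Ω) {α β : Type*} [mα : MeasurableSpace α]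
    [MeasurableSpace β] (X : (ℝ × Ω) × α → β) : Prop :=
  Measurable[(predSigma F).prod mα] X

/-- `𝒫ℳ(F, α)`-measurability: for every `s`, the restriction of `X` to times in `[0,s]`
is `B([0,s]) ⊗ F_s ⊗ B(α)`-measurable. -/
def ProgParamMeas (F : ℝ → MeasurableSpace Ω) {α β : Type*} [mα : MeasurableSpace α]
    [MeasurableSpace β] (X : (ℝ × Ω) × α → β) : Prop :=
  ∀ s : ℝ, Measurable[MeasurableSpace.prod
      (inferInstance : MeasurableSpace (Set.Icc (0 : ℝ) s))
      (MeasurableSpace.prod (F s) mα)]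
    fun p : Set.Icc (0 : ℝ) s × Ω × α => X (((p.1 : ℝ), p.2.1), p.2.2)

/-- `G` is the progressive enlargement of the filtration `F` with the random times
`τ_1 ≤ … ≤ τ_n` and the marks `ζ_1, …, ζ_n`: the smallest right-continuous filtration
containing `F` such that each `τ_k` is a `G`-stopping time and each `ζ_k` is
`G_{τ_k}`-measurable. -/
def IsProgEnlargement {Em : Type*} [MeasurableSpace Em]
    (F : ℝ → MeasurableSpace Ω) (n : ℕ) (τ : ℕ → Ω → ℝ) (ζ : ℕ → Ω → Em)
    (G : ℝ → MeasurableSpace Ω) : Prop :=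
  Monotone G ∧ (∀ t, F t ≤ G t) ∧ (∀ t, G t = ⨅ s ∈ Set.Ioi t, G s) ∧
  (∀ k, 1 ≤ k → k ≤ n → ∀ t : ℝ, MeasurableSet[G t] {ω | τ k ω ≤ t}) ∧
  (∀ k, 1 ≤ k → k ≤ n → ∀ B : Set Em, MeasurableSet B →
    ∀ t : ℝ, MeasurableSet[G t] ({ω | ζ k ω ∈ B} ∩ {ω | τ k ω ≤ t})) ∧
  ∀ G' : ℝ → MeasurableSpace Ω, Monotone G' → (∀ t, F t ≤ G' t) →
    (∀ t, G' t = ⨅ s ∈ Set.Ioi t, G' s) →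
    (∀ k, 1 ≤ k → k ≤ n → ∀ t : ℝ, MeasurableSet[G' t] {ω | τ k ω ≤ t}) →
    (∀ k, 1 ≤ k → k ≤ n → ∀ B : Set Em, MeasurableSet B →
      ∀ t : ℝ, MeasurableSet[G' t] ({ω | ζ k ω ∈ B} ∩ {ω | τ k ω ≤ t})) →
    ∀ t, G t ≤ G' t

/-- The reference measure `de` on a Borel subset `E ⊆ ℝ^m`: the restriction of the Lebesgue
measure to `E`, viewed as a measure on the subtype `↥E`. -/
def measE {mdim : ℕ} (E : Set (Fin mdim → ℝ)) : Measure ↥E :=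
  (volume : Measure (Fin mdim → ℝ)).comap Subtype.val

/-- The measure `dθ_{k+1}…dθ_n de_{k+1}…de_n` on `ℝ^{n-k} × E^{n-k}`. -/
def prodFinMeas {mdim : ℕ} (E : Set (Fin mdim → ℝ)) (j : ℕ) :
    Measure ((Fin j → ℝ) × (Fin j → ↥E)) :=
  (volume : Measure (Fin j → ℝ)).prod (Measure.pi fun _ => measE E)

/-- Concatenation of a `k`-vector with an `(n-k)`-vector into an `n`-vector. -/
def splice {α : Type*} {n k : ℕ} (θ : Fin k → α) (q : Fin (n - k) → α) : Fin n → α :=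
  fun i => if h : (i : ℕ) < k then θ ⟨i, h⟩
    else q ⟨(i : ℕ) - k, by have := i.isLt; omega⟩

/-- The density hypothesis (HD): `γ` is a positive `𝒫(F) ⊗ B(Δ_n) ⊗ B(E^n)`-measurable map
such that `P[(τ_{(n)}, ζ_{(n)}) ∈ dθ de | F_t] = γ_t(θ, e) dθ de` for all `t ≥ 0`. -/
def DensityHypothesis {mΩ : MeasurableSpace Ω} {mdim : ℕ} {E : Set (Fin mdim → ℝ)}
    (P : Measure Ω) (F : ℝ → MeasurableSpace Ω) {n : ℕ}
    (τ : ℕ → Ω → ℝ) (ζ : ℕ → Ω → ↥E)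
    (γ : (ℝ × Ω) × ((Fin n → ℝ) × (Fin n → ↥E)) → ℝ) : Prop :=
  (∀ p, 0 < γ p) ∧
  Measurable[(predSigma F).prod inferInstance] γ ∧
  ∀ t : ℝ, 0 ≤ t → ∀ A : Set ((Fin n → ℝ) × (Fin n → ↥E)), MeasurableSet A →
    P[(fun ω => A.indicator (fun _ => (1 : ℝ))
        (fun i => τ ((i : ℕ) + 1) ω, fun i => ζ ((i : ℕ) + 1) ω)) | F t]
      =ᵐ[P] fun ω => ∫ p in A, γ ((t, ω), p) ∂(prodFinMeas E n)

/-- The last coordinate `θ_k` of `θ ∈ Δ_k` (with the convention `θ_0 = 0`). -/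
def lastOr0 : {k : ℕ} → (Fin k → ℝ) → ℝ
  | 0, _ => 0
  | k + 1, θ => θ (Fin.last k)

/-- The `S^∞[a, b]`-norm of a process: `ess sup_{t ∈ [a,b]} |Y_t|` (valued in `ℝ≥0∞`). -/
def SInfty {Ω : Type*} [MeasurableSpace Ω] (P : Measure Ω) (a b : ℝ)
    (Y : ℝ × Ω → ℝ) : ℝ≥0∞ :=
  essSup (fun ω => ⨆ t ∈ Set.Icc a b, (‖Y (t, ω)‖₊ : ℝ≥0∞)) P

theorem measurable_prodMk_left_predSigma (F : ℝ → MeasurableSpace Ω) (t : ℝ) :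
    Measurable[F t, predSigma F] fun ω => (t, ω) := by
  rw [measurable_iff_comap_le, predSigma, MeasurableSpace.comap_iSup]
  refine iSup_le fun X => ?_
  rw [MeasurableSpace.comap_comp]
  exact measurable_iff_comap_le.mp (X.2.2 t)

theorem measurable_timeSlice_of_predSigma {α : Type*} {mα : MeasurableSpace α}
    {F : ℝ → MeasurableSpace Ω} {X : (ℝ × Ω) × α → ℝ}
    (hX : Measurable[(predSigma F).prod mα] X) (t : ℝ) :
    Measurable[(F t).prod mα] fun q : Ω × α => X ((t, q.1), q.2) :=
  hX.comp (((measurable_prodMk_left_predSigma F t).comp measurable_fst).prodMk measurable_snd)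

theorem ProgParamMeas.measurable_timeSlice {α : Type*} {mα : MeasurableSpace α}
    {F : ℝ → MeasurableSpace Ω} {X : (ℝ × Ω) × α → ℝ} (hX : ProgParamMeas F X)
    {t s : ℝ} (ht : t ∈ Icc 0 s) :
    Measurable[(F s).prod mα] fun q : Ω × α => X ((t, q.1), q.2) :=
  (hX s).comp ((measurable_const (a := (⟨t, ht⟩ : Icc 0 s))).prodMk measurable_id)

theorem sigmaFinite_comap {α β : Type*} [MeasurableSpace α] [MeasurableSpace β] {f : α → β}
    (hf : Measurable f) (μ : Measure β) [SigmaFinite μ] : SigmaFinite (μ.comap f) :=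
  ⟨⟨{ set := fun i => f ⁻¹' spanningSets μ i
      set_mem := fun _ => trivial
      finite := fun i =>
        (Measure.comap_apply_le f μ (hf (measurableSet_spanningSets μ i)).nullMeasurableSet
          ).trans_lt ((measure_mono (image_preimage_subset _ _)).trans_lt
            (measure_spanningSets_lt_top μ i))
      spanning := by rw [← preimage_iUnion, iUnion_spanningSets, preimage_univ] }⟩⟩

instance {mdim : ℕ} (E : Set (Fin mdim → ℝ)) : SigmaFinite (measE E) :=
  sigmaFinite_comap measurable_subtype_coe _

instance {mdim : ℕ} (E : Set (Fin mdim → ℝ)) (j : ℕ) : SigmaFinite (prodFinMeas E j) := by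
  unfold prodFinMeas; infer_instance

-- `Δ_k` in the paper
def orderedSimplex (k : ℕ) : Set (Fin k → ℝ) := {θ | Monotone θ ∧ ∀ i, 0 ≤ θ i}

theorem measurableSet_orderedSimplex (k : ℕ) : MeasurableSet (orderedSimplex k) :=
  (isClosed_monotone.inter (isClosed_Ici (a := 0))).measurableSet

theorem take_mem_orderedSimplex {n k : ℕ} (hk : k ≤ n) {θ : Fin n → ℝ}
    (hθ : θ ∈ orderedSimplex n) : Fin.take k hk θ ∈ orderedSimplex k :=
  ⟨fun _ _ hij => hθ.1 ((Fin.castLE_le_castLE_iff hk).2 hij), fun _ => hθ.2 _⟩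

theorem shift_mem_orderedSimplex {n : ℕ} {s : ℕ → ℝ} (hs0 : ∀ k, 0 ≤ s k)
    (hs : ∀ k, 1 ≤ k → k < n → s k ≤ s (k + 1)) :
    (fun i : Fin n => s (i + 1)) ∈ orderedSimplex n := by
  have hmono : MonotoneOn s (Icc 1 n) := monotoneOn_of_le_succ ordConnected_Icc
    fun k _ hk hk' => by
      rw [Order.succ_eq_add_one] at hk' ⊢
      exact hs k hk.1 (by simpa using hk'.2)
  refine ⟨fun i j hij => hmono ?_ ?_ (by simpa using hij), fun i => hs0 _⟩ <;>
    simp [Fin.is_lt]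

theorem measurable_lastOr0 : ∀ {k : ℕ}, Measurable (lastOr0 : (Fin k → ℝ) → ℝ)
  | 0 => measurable_const
  | _ + 1 => measurable_pi_apply _

theorem lastOr0_nonneg {k : ℕ} {θ : Fin k → ℝ} (hθ : θ ∈ orderedSimplex k) : 0 ≤ lastOr0 θ := by
  cases k with
  | zero => exact le_rfl
  | succ k => exact hθ.2 _

theorem lastOr0_shift_le {k : ℕ} {s : ℕ → ℝ} {t : ℝ} (ht : 0 ≤ t) (hk : 1 ≤ k → s k ≤ t) :
    lastOr0 (fun i : Fin k => s (i + 1)) ≤ t := by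
  cases k with
  | zero => exact ht
  | succ k => exact hk k.succ_pos

theorem mem_of_continuousWithinAt_Ici_of_dense {X : Type*} [TopologicalSpace X] {f : ℝ → X}
    {K : Set X} (hK : IsClosed K) (hf : ∀ t, ContinuousWithinAt f (Ici t) t) {s : Set ℝ}
    (hs : Dense s) {a b : ℝ} (hsK : ∀ q ∈ s, q ∈ Ico a b → f q ∈ K) (hb : f b ∈ K) {t : ℝ}
    (ht : t ∈ Icc a b) : f t ∈ K := by
  rcases ht.2.eq_or_lt with rfl | htb
  · exact hb
  have hcl : t ∈ closure (Ioo t b ∩ s) :=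
    closure_minimal (hs.open_subset_closure_inter isOpen_Ioo) isClosed_closure
      (by simpa [closure_Ioo htb.ne] using htb.le)
  refine closure_minimal ?_ hK (((hf t).mono fun q hq => hq.1.1.le).mem_closure_image hcl)
  rintro _ ⟨q, ⟨hq, hqs⟩, rfl⟩
  exact hsK q hqs ⟨ht.1.trans hq.1.le, hq.2⟩

section ConditionalDensity

variable {Λ : Type*} {m mΩ : MeasurableSpace Ω} {mΛ : MeasurableSpace Λ}

-- `g (ω, ·)` is a density of the conditional law of `ξ` given `m` w.r.t. `ν`; (HD) is this
-- with `m = F_T`, `ξ = (τ_{(n)}, ζ_{(n)})` and `g = γ_T`.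
def HasCondDensity (P : Measure Ω) (m : MeasurableSpace Ω) (ξ : Ω → Λ) (ν : Measure Λ)
    (g : Ω × Λ → ℝ) : Prop :=
  ∀ A : Set Λ, MeasurableSet A →
    P[(fun ω => A.indicator (fun _ => (1 : ℝ)) (ξ ω)) | m] =ᵐ[P] fun ω => ∫ p in A, g (ω, p) ∂ν

variable {P : Measure Ω} {ξ : Ω → Λ} {ν : Measure Λ} {g : Ω × Λ → ℝ}

theorem setIntegral_eq_toReal_setLIntegral (hg : Measurable[m.prod mΛ] g) (hg0 : ∀ q, 0 ≤ g q)
    (ω : Ω) (A : Set Λ) :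
    ∫ p in A, g (ω, p) ∂ν = (∫⁻ p in A, ENNReal.ofReal (g (ω, p)) ∂ν).toReal :=
  integral_eq_lintegral_of_nonneg_ae (.of_forall fun _ => hg0 _)
    (hg.comp (@measurable_prodMk_left Ω Λ m mΛ ω)).aestronglyMeasurable

variable [IsFiniteMeasure P]

theorem HasCondDensity.lintegral_eq_one (h : HasCondDensity P m ξ ν g) (hm : m ≤ mΩ)
    (hg : Measurable[m.prod mΛ] g) (hg0 : ∀ q, 0 ≤ g q) :
    ∀ᵐ ω ∂P, ∫⁻ p, ENNReal.ofReal (g (ω, p)) ∂ν = 1 := by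
  have h1 := h univ MeasurableSet.univ
  simp only [indicator_univ, condExp_const hm] at h1
  filter_upwards [h1] with ω hω
  rw [← ENNReal.toReal_eq_one_iff, ← setLIntegral_univ,
    ← setIntegral_eq_toReal_setLIntegral hg hg0, ← hω]

theorem HasCondDensity.measure_inter_preimage (h : HasCondDensity P m ξ ν g) (hm : m ≤ mΩ)
    [SFinite ν] (hξ : Measurable ξ) (hg : Measurable[m.prod mΛ] g) (hg0 : ∀ q, 0 ≤ g q)
    {S : Set Ω} (hS : MeasurableSet[m] S) {A : Set Λ} (hA : MeasurableSet A) :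
    P (S ∩ ξ ⁻¹' A) = ∫⁻ ω in S, ∫⁻ p in A, ENNReal.ofReal (g (ω, p)) ∂ν ∂P := by
  set I : Ω → ℝ≥0∞ := fun ω => ∫⁻ p in A, ENNReal.ofReal (g (ω, p)) ∂ν
  have hI : Measurable[m] I := @Measurable.lintegral_prod_right Ω Λ m mΛ _ _ _ hg.ennreal_ofReal
  have hI1 : ∀ᵐ ω ∂P, I ω ≤ 1 := by
    filter_upwards [h.lintegral_eq_one hm hg hg0] with ω hω
    exact hω ▸ setLIntegral_le_lintegral A _
  have hind : (fun ω => A.indicator (fun _ => (1 : ℝ)) (ξ ω)) = (ξ ⁻¹' A).indicator 1 := rfl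
  have hint : ∫ ω in S, A.indicator (fun _ => (1 : ℝ)) (ξ ω) ∂P = ∫ ω in S, (I ω).toReal ∂P := by
    rw [← setIntegral_condExp hm _ hS]
    · refine setIntegral_congr_ae (hm S hS) ?_
      filter_upwards [h A hA] with ω hω _
      rw [hω, setIntegral_eq_toReal_setLIntegral hg hg0]
    · rw [hind]
      exact (integrable_const 1).indicator (hξ hA)
  rw [hind, integral_indicator_one (hξ hA), integral_toReal (hI.mono hm le_rfl).aemeasurable
    (ae_restrict_of_ae (hI1.mono fun _ h => h.trans_lt ENNReal.one_lt_top)),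
    Measure.real, Measure.restrict_apply (hξ hA), inter_comm] at hint
  refine (ENNReal.toReal_eq_toReal_iff' (measure_ne_top P _) (ne_top_of_le_ne_top
    (measure_ne_top P S) ?_)).1 hint
  calc ∫⁻ ω in S, I ω ∂P ≤ ∫⁻ _ in S, 1 ∂P := lintegral_mono_ae (ae_restrict_of_ae hI1)
    _ = P S := by simp

theorem HasCondDensity.map_prodMk_eq_withDensity (h : HasCondDensity P m ξ ν g) (hm : m ≤ mΩ)
    [SFinite ν] (hξ : Measurable ξ) (hg : Measurable[m.prod mΛ] g) (hg0 : ∀ q, 0 ≤ g q) :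
    @Measure.map Ω (Ω × Λ) mΩ (m.prod mΛ) (fun ω => (ω, ξ ω)) P =
      @Measure.withDensity (Ω × Λ) (m.prod mΛ) (@Measure.prod Ω Λ m mΛ (P.trim hm) ν)
        fun q => ENNReal.ofReal (g q) := by
  have hφ : Measurable[mΩ, m.prod mΛ] fun ω => (ω, ξ ω) :=
    (measurable_id'' hm).prodMk hξ
  have : IsFiniteMeasure (@Measure.map Ω (Ω × Λ) mΩ (m.prod mΛ) (fun ω => (ω, ξ ω)) P) :=
    ⟨by rw [Measure.map_apply hφ (@MeasurableSet.univ _ (m.prod mΛ))]; exact measure_lt_top P _⟩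
  have hrect : ∀ S, MeasurableSet[m] S → ∀ A, MeasurableSet A →
      @Measure.map Ω (Ω × Λ) mΩ (m.prod mΛ) (fun ω => (ω, ξ ω)) P (S ×ˢ A) =
      @Measure.withDensity (Ω × Λ) (m.prod mΛ) (@Measure.prod Ω Λ m mΛ (P.trim hm) ν)
        (fun q => ENNReal.ofReal (g q)) (S ×ˢ A) := by
    intro S hS A hA
    have hSA : MeasurableSet[m.prod mΛ] (S ×ˢ A) := @MeasurableSet.prod Ω Λ m mΛ _ _ hS hA
    have hI : Measurable[m] fun ω => ∫⁻ p in A, ENNReal.ofReal (g (ω, p)) ∂ν :=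
      @Measurable.lintegral_prod_right Ω Λ m mΛ _ _ _ hg.ennreal_ofReal
    rw [Measure.map_apply hφ hSA, withDensity_apply _ hSA,
      @setLIntegral_prod Ω Λ m mΛ _ ν _ _ S A _ hg.ennreal_ofReal.aemeasurable,
      setLIntegral_trim hm hI hS,
      ← h.measure_inter_preimage hm hξ hg hg0 hS hA]
    rfl
  refine ext_of_generate_finite _ (@generateFrom_prod Ω Λ m mΛ).symm
    (@isPiSystem_prod Ω Λ m mΛ) ?_ ?_
  · rintro _ ⟨S, hS, A, hA, rfl⟩
    exact hrect S hS A hA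
  · simpa using hrect univ MeasurableSet.univ univ MeasurableSet.univ

theorem HasCondDensity.ae_comp_of_forall_ae (h : HasCondDensity P m ξ ν g) (hm : m ≤ mΩ)
    [SFinite ν] (hξ : Measurable ξ) (hg : Measurable[m.prod mΛ] g) (hg0 : ∀ q, 0 ≤ g q)
    {Q : Ω → Λ → Prop} (hQ : MeasurableSet[m.prod mΛ] {q | Q q.1 q.2})
    (hQae : ∀ p, ∀ᵐ ω ∂P, Q ω p) : ∀ᵐ ω ∂P, Q ω (ξ ω) := by
  have hQc : MeasurableSet[m.prod mΛ] {q | Q q.1 q.2}ᶜ := hQ.compl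
  have hnull : @Measure.prod Ω Λ m mΛ (P.trim hm) ν {q | Q q.1 q.2}ᶜ = 0 := by
    rw [@Measure.prod_apply_symm Ω Λ m mΛ _ _ _ _ _ hQc]
    refine (lintegral_congr fun p => ?_).trans lintegral_zero
    rw [trim_measurableSet_eq hm (measurable_prodMk_right hQc)]
    exact ae_iff.1 (hQae p)
  have := h.map_prodMk_eq_withDensity hm hξ hg hg0 ▸ withDensity_absolutelyContinuous _ _ hnull
  have hφ : Measurable[mΩ, m.prod mΛ] fun ω => (ω, ξ ω) := (measurable_id'' hm).prodMk hξ
  rwa [Measure.map_apply hφ hQc] at this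

theorem HasCondDensity.ae_forall_abs_le_comp (h : HasCondDensity P m ξ ν g) (hm : m ≤ mΩ)
    [SFinite ν] (hξ : Measurable ξ) (hg : Measurable[m.prod mΛ] g) (hg0 : ∀ q, 0 ≤ g q)
    {Z : ℝ → Ω × Λ → ℝ} {T M : ℝ} (hZ : ∀ t ∈ Icc 0 T, Measurable[m.prod mΛ] (Z t))
    (hZrc : ∀ x t, ContinuousWithinAt (fun s => Z s x) (Ici t) t)
    {a : Λ → ℝ} (ha : Measurable a) {D : Set Λ} (hD : MeasurableSet D) (ha0 : ∀ p ∈ D, 0 ≤ a p)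
    (hbound : ∀ p ∈ D, ∀ᵐ ω ∂P, ∀ t ∈ Icc (a p) T, |Z t (ω, p)| ≤ M) :
    ∀ᵐ ω ∂P, ξ ω ∈ D → ∀ t ∈ Icc (a (ξ ω)) T, |Z t (ω, ξ ω)| ≤ M := by
  -- right-continuity reduces the bound to the countably many times in `C`
  set C : Set ℝ := Icc 0 T ∩ insert T (range ((↑) : ℚ → ℝ))
  have : Countable C := (((countable_range _).insert T).mono inter_subset_right).to_subtype
  have hQ : MeasurableSet[m.prod mΛ] {x | x.2 ∈ D → ∀ q : C, a x.2 ≤ q → |Z q x| ≤ M} := by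
    -- makes `m.prod mΛ` the instance on `Ω × Λ` for the `Prop`-valued measurability lemmas
    let : MeasurableSpace Ω := m
    refine measurableSet_setOfPred.2 (.imp (measurableSet_setOfPred.1 (measurable_snd hD)) (.forall
      fun q => .imp ?_ ?_)) <;> refine measurableSet_setOfPred.1 (measurableSet_le ?_ ?_)
    exacts [ha.comp measurable_snd, measurable_const,
      continuous_abs.measurable.comp (hZ q q.2.1), measurable_const]
  have hQae := h.ae_comp_of_forall_ae hm hξ hg hg0
    (Q := fun ω p => p ∈ D → ∀ q : C, a p ≤ q → |Z q (ω, p)| ≤ M) hQ fun p => by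
    by_cases hp : p ∈ D
    · filter_upwards [hbound p hp] with ω hω _ q hq using hω q ⟨hq, q.2.1.2⟩
    · exact .of_forall fun _ hp' => absurd hp' hp
  filter_upwards [hQae] with ω hω hD t ht
  have hC : ∀ q ∈ insert T (range ((↑) : ℚ → ℝ)), q ∈ Icc (a (ξ ω)) T →
      |Z q (ω, ξ ω)| ≤ M :=
    fun q hq hqI => hω hD ⟨q, ⟨(ha0 _ hD).trans hqI.1, hqI.2⟩, hq⟩ hqI.1
  exact mem_of_continuousWithinAt_Ici_of_dense (K := {y | |y| ≤ M})
    (isClosed_le continuous_abs continuous_const) (hZrc _) Rat.denseRange_cast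
    (fun q hq hqI => hC q (.inr hq) (Ico_subset_Icc_self hqI))
    (hC T (mem_insert _ _) ⟨ht.1.trans ht.2, le_rfl⟩) ht

end ConditionalDensity

theorem SInfty_le_ofReal_iff {mΩ : MeasurableSpace Ω} {P : Measure Ω} {a b M : ℝ} (hM : 0 ≤ M)
    {Y : ℝ × Ω → ℝ} :
    SInfty P a b Y ≤ ENNReal.ofReal M ↔ ∀ᵐ ω ∂P, ∀ t ∈ Icc a b, |Y (t, ω)| ≤ M := by
  have hpath : ∀ ω, (⨆ t ∈ Icc a b, (‖Y (t, ω)‖₊ : ℝ≥0∞)) ≤ ENNReal.ofReal M ↔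
      ∀ t ∈ Icc a b, |Y (t, ω)| ≤ M := by
    intro ω
    simp only [iSup₂_le_iff, ← enorm_eq_nnnorm, Real.enorm_eq_ofReal_abs,
      ENNReal.ofReal_le_ofReal_iff hM]
  refine ⟨fun h => ?_, fun h => essSup_le_of_ae_le _ (h.mono fun ω => (hpath ω).2)⟩
  filter_upwards [ENNReal.ae_le_essSup (μ := P) fun ω => ⨆ t ∈ Icc a b, (‖Y (t, ω)‖₊ : ℝ≥0∞)]
    with ω hω using (hpath ω).1 (hω.trans h)

theorem abs_piecewise_le {n : ℕ} (hn : 1 ≤ n) {M : ℝ} (hM : 0 ≤ M) {s y : ℕ → ℝ} {t : ℝ}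
    (hy : ∀ k ≤ n, (1 ≤ k → s k ≤ t) → |y k| ≤ M) :
    |(if t < s 1 then y 0 else 0) +
      (∑ k ∈ Finset.Ico 1 n, if s k ≤ t ∧ t < s (k + 1) then y k else 0) +
      (if s n ≤ t then y n else 0)| ≤ (n + 1) * M := by
  have hite : ∀ {c : Prop} [Decidable c] {k : ℕ}, (c → |y k| ≤ M) → |if c then y k else 0| ≤ M :=
    fun hc => by split_ifs with h; exacts [hc h, by simpa using hM]
  have hfirst := hite (c := t < s 1) fun _ => hy 0 n.zero_le (by omega)
  have hmid : |∑ k ∈ Finset.Ico 1 n, if s k ≤ t ∧ t < s (k + 1) then y k else 0| ≤ (n - 1) * M :=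
    calc _ ≤ ∑ k ∈ Finset.Ico 1 n, |if s k ≤ t ∧ t < s (k + 1) then y k else 0| :=
          Finset.abs_sum_le_sum_abs _ _
      _ ≤ (Finset.Ico 1 n).card • M := Finset.sum_le_card_nsmul _ _ _ fun k hk =>
          hite fun h => hy k (Finset.mem_Ico.1 hk).2.le fun _ => h.1
      _ = (n - 1) * M := by rw [Nat.card_Ico, nsmul_eq_mul, Nat.cast_sub hn, Nat.cast_one]
  have hlast := hite fun h => hy n le_rfl fun _ => h
  calc _ ≤ _ := abs_add_three _ _ _
    _ ≤ M + (n - 1) * M + M := by gcongr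
    _ = (n + 1) * M := by ring

theorem ae_forall_abs_le_at_randomTimes {mΩ : MeasurableSpace Ω} {P : Measure Ω}
    [IsFiniteMeasure P] {mdim : ℕ} {E : Set (Fin mdim → ℝ)} {F : ℝ → MeasurableSpace Ω}
    {T : ℝ} (hT : 0 ≤ T) (hFT : F T ≤ mΩ) {n k : ℕ} (hk : k ≤ n)
    {τ : ℕ → Ω → ℝ} {ζ : ℕ → Ω → ↥E} (hτm : ∀ k, Measurable (τ k)) (hτ0 : ∀ k ω, 0 ≤ τ k ω)
    (hτmono : ∀ k, 1 ≤ k → k < n → ∀ ω, τ k ω ≤ τ (k + 1) ω) (hζm : ∀ k, Measurable (ζ k))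
    {γ : (ℝ × Ω) × ((Fin n → ℝ) × (Fin n → ↥E)) → ℝ} (hγ : DensityHypothesis P F τ ζ γ)
    {X : (ℝ × Ω) × (Fin k → ℝ) × (Fin k → ↥E) → ℝ} (hX : ProgParamMeas F X)
    (hXrc : ∀ θ e ω t, ContinuousWithinAt (fun u => X ((u, ω), θ, e)) (Ici t) t)
    {M : ℝ} (hM0 : 0 ≤ M) (hXM : ∀ θ e, θ ∈ orderedSimplex k →
      SInfty P (min (lastOr0 θ) T) T (fun p => X (p, θ, e)) ≤ ENNReal.ofReal M) :
    ∀ᵐ ω ∂P, ∀ t ∈ Icc (lastOr0 fun i : Fin k => τ (i + 1) ω) T,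
      |X ((t, ω), (fun i => τ (i + 1) ω, fun i => ζ (i + 1) ω))| ≤ M := by
  set ξ : Ω → (Fin n → ℝ) × (Fin n → ↥E) := fun ω => (fun i => τ (i + 1) ω, fun i => ζ (i + 1) ω)
  have hξ : Measurable ξ :=
    (measurable_pi_lambda _ fun _ => hτm _).prodMk (measurable_pi_lambda _ fun _ => hζm _)
  have hdens : HasCondDensity P (F T) ξ (prodFinMeas E n) fun q => γ ((T, q.1), q.2) :=
    hγ.2.2 T hT
  have htake : Measurable fun x : (Fin n → ℝ) × (Fin n → ↥E) =>
      (Fin.take k hk x.1, Fin.take k hk x.2) :=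
    (measurable_pi_lambda _ fun _ => measurable_fst.eval).prodMk
      (measurable_pi_lambda _ fun _ => measurable_snd.eval)
  have hbound : ∀ p : (Fin n → ℝ) × (Fin n → ↥E), p.1 ∈ orderedSimplex n →
      ∀ᵐ ω ∂P, ∀ t ∈ Icc (lastOr0 (Fin.take k hk p.1)) T,
        |X ((t, ω), Fin.take k hk p.1, Fin.take k hk p.2)| ≤ M := fun p hp =>
    ((SInfty_le_ofReal_iff hM0).1 (hXM _ _ (take_mem_orderedSimplex hk hp))).mono
      fun _ hω t ht => hω t ⟨(min_le_left _ _).trans ht.1, ht.2⟩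
  filter_upwards [hdens.ae_forall_abs_le_comp hFT hξ
    (measurable_timeSlice_of_predSigma hγ.2.1 T) (fun _ => (hγ.1 _).le)
    (Z := fun t x => X ((t, x.1), Fin.take k hk x.2.1, Fin.take k hk x.2.2))
    (fun t ht => (hX.measurable_timeSlice ht).comp
      (measurable_fst.prodMk (htake.comp measurable_snd)))
    (fun x t => hXrc _ _ x.1 t) (measurable_lastOr0.comp htake.fst)
    ((measurableSet_orderedSimplex n).preimage measurable_fst)
    (fun p hp => lastOr0_nonneg (take_mem_orderedSimplex hk hp)) hbound] with ω hω
  exact hω (shift_mem_orderedSimplex (hτ0 · ω) (hτmono · · · ω))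

theorem uniform_bound_transfer_general
    {Ω : Type*} [mΩ : MeasurableSpace Ω] (P : Measure Ω) [IsProbabilityMeasure P]
    {mdim : ℕ} {E : Set (Fin mdim → ℝ)}
    (F : ℝ → MeasurableSpace Ω) (hFle : ∀ t, F t ≤ mΩ)
    (n : ℕ) (hn : 1 ≤ n)
    (τ : ℕ → Ω → ℝ) (ζ : ℕ → Ω → ↥E)
    (hτm : ∀ k, Measurable (τ k)) (hτ0 : ∀ k ω, 0 ≤ τ k ω)
    (hτmono : ∀ k, 1 ≤ k → k < n → ∀ ω, τ k ω ≤ τ (k + 1) ω)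
    (hζm : ∀ k, Measurable (ζ k))
    (γ : (ℝ × Ω) × ((Fin n → ℝ) × (Fin n → ↥E)) → ℝ)
    (hγ : DensityHypothesis P F τ ζ γ)
    (T : ℝ) (hT : 0 < T)
    (Yd : (k : ℕ) → (ℝ × Ω) × (Fin k → ℝ) × (Fin k → ↥E) → ℝ)
    (hYdmeas : ∀ k, k ≤ n → ProgParamMeas F (Yd k))
    -- each `Y^k` is càdlàg in time
    (hYdrc : ∀ k, k ≤ n → ∀ (θ : Fin k → ℝ) (e : Fin k → ↥E) (ω : Ω) (t : ℝ),
      ContinuousWithinAt (fun u => Yd k ((u, ω), θ, e)) (Set.Ici t) t)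
    (M : ℝ) (hM0 : 0 ≤ M)
    (hM : ∀ k, k ≤ n → ∀ (θ : Fin k → ℝ) (e : Fin k → ↥E),
      (Monotone θ ∧ ∀ i, 0 ≤ θ i) →
      SInfty P (min (lastOr0 θ) T) T (fun p => Yd k (p, θ, e)) ≤ ENNReal.ofReal M)
    (Y : ℝ × Ω → ℝ)
    (hY : ∀ t ω, Y (t, ω) =
      (if t < τ 1 ω then
          Yd 0 ((t, ω), (fun i => τ ((i : ℕ) + 1) ω, fun i => ζ ((i : ℕ) + 1) ω))
        else 0) +
      (∑ k ∈ Finset.Ico 1 n,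
        if τ k ω ≤ t ∧ t < τ (k + 1) ω then
          Yd k ((t, ω), (fun i => τ ((i : ℕ) + 1) ω, fun i => ζ ((i : ℕ) + 1) ω))
        else 0) +
      (if τ n ω ≤ t then
          Yd n ((t, ω), (fun i => τ ((i : ℕ) + 1) ω, fun i => ζ ((i : ℕ) + 1) ω))
        else 0)) :
    (∀ᵐ ω ∂P, ∀ t ∈ Set.Icc (0 : ℝ) T, |Y (t, ω)| ≤ (n + 1) * M) ∧
    SInfty P 0 T Y ≤ ENNReal.ofReal ((n + 1) * M) := by
  have hcomp : ∀ k ≤ n, ∀ᵐ ω ∂P, ∀ t ∈ Icc (lastOr0 fun i : Fin k => τ (i + 1) ω) T,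
      |Yd k ((t, ω), (fun i => τ (i + 1) ω, fun i => ζ (i + 1) ω))| ≤ M := fun k hk =>
    ae_forall_abs_le_at_randomTimes hT.le (hFle T) hk hτm hτ0 hτmono hζm hγ (hYdmeas k hk)
      (hYdrc k hk) hM0 (hM k hk)
  have hpath : ∀ᵐ ω ∂P, ∀ t ∈ Icc (0 : ℝ) T, |Y (t, ω)| ≤ (n + 1) * M := by
    filter_upwards [(finite_Iic n).eventually_all.2 hcomp] with ω hω t ht
    rw [hY]
    exact abs_piecewise_le hn hM0 fun k hk hkt =>
      hω k hk t ⟨lastOr0_shift_le (s := (τ · ω)) ht.1 hkt, ht.2⟩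
  exact ⟨hpath, (SInfty_le_ofReal_iff (by positivity)).2 hpath⟩

/-- **Uniform bound transfer** (Step 3 of the proof of Theorem 3.1): assume (HD). If each
càdlàg `𝒫ℳ(F, Δ_k, E^k)`-measurable process `Y^k` satisfies
`‖Y^k(θ_{(k)}, e_{(k)})‖_{S^∞[θ_k ∧ T, T]} ≤ M` for all `(θ, e) ∈ Δ_k × E^k`, then
`P`-a.s. `|Y_t| ≤ (n+1) M` for all `t ∈ [0, T]`, where
`Y_t = Y^0_t 1_{t < τ_1} + ∑_{k=1}^n Y^k_t(τ_{(k)}, ζ_{(k)}) 1_{τ_k ≤ t < τ_{k+1}}`;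
in particular `‖Y‖_{S^∞[0,T]} ≤ (n+1) M`. -/
theorem uniform_bound_transfer
    {Ω : Type*} [mΩ : MeasurableSpace Ω] (P : Measure Ω) [IsProbabilityMeasure P]
    {mdim : ℕ} {E : Set (Fin mdim → ℝ)} (hE : MeasurableSet E)
    (F : ℝ → MeasurableSpace Ω) (hFmono : Monotone F) (hFle : ∀ t, F t ≤ mΩ)
    (n : ℕ) (hn : 1 ≤ n)
    (τ : ℕ → Ω → ℝ) (ζ : ℕ → Ω → ↥E)
    (hτm : ∀ k, Measurable (τ k)) (hτ0 : ∀ k ω, 0 ≤ τ k ω)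
    (hτmono : ∀ k, 1 ≤ k → k < n → ∀ ω, τ k ω ≤ τ (k + 1) ω)
    (hζm : ∀ k, Measurable (ζ k))
    (γ : (ℝ × Ω) × ((Fin n → ℝ) × (Fin n → ↥E)) → ℝ)
    (hγ : DensityHypothesis P F τ ζ γ)
    (T : ℝ) (hT : 0 < T)
    (Yd : (k : ℕ) → (ℝ × Ω) × (Fin k → ℝ) × (Fin k → ↥E) → ℝ)
    (hYdmeas : ∀ k, k ≤ n → ProgParamMeas F (Yd k))
    -- each `Y^k` is càdlàg in time
    (hYdrc : ∀ k, k ≤ n → ∀ (θ : Fin k → ℝ) (e : Fin k → ↥E) (ω : Ω) (t : ℝ),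
      ContinuousWithinAt (fun u => Yd k ((u, ω), θ, e)) (Set.Ici t) t)
    (hYdll : ∀ k, k ≤ n → ∀ (θ : Fin k → ℝ) (e : Fin k → ↥E) (ω : Ω) (t : ℝ),
      ∃ l : ℝ, Filter.Tendsto (fun u => Yd k ((u, ω), θ, e))
        (nhdsWithin t (Set.Iio t)) (nhds l))
    (M : ℝ) (hM0 : 0 ≤ M)
    (hM : ∀ k, k ≤ n → ∀ (θ : Fin k → ℝ) (e : Fin k → ↥E),
      (Monotone θ ∧ ∀ i, 0 ≤ θ i) →
      SInfty P (min (lastOr0 θ) T) T (fun p => Yd k (p, θ, e)) ≤ ENNReal.ofReal M)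
    (Y : ℝ × Ω → ℝ)
    (hY : ∀ t ω, Y (t, ω) =
      (if t < τ 1 ω then
          Yd 0 ((t, ω), (fun i => τ ((i : ℕ) + 1) ω, fun i => ζ ((i : ℕ) + 1) ω))
        else 0) +
      (∑ k ∈ Finset.Ico 1 n,
        if τ k ω ≤ t ∧ t < τ (k + 1) ω then
          Yd k ((t, ω), (fun i => τ ((i : ℕ) + 1) ω, fun i => ζ ((i : ℕ) + 1) ω))
        else 0) +
      (if τ n ω ≤ t then
          Yd n ((t, ω), (fun i => τ ((i : ℕ) + 1) ω, fun i => ζ ((i : ℕ) + 1) ω))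
        else 0)) :
    (∀ᵐ ω ∂P, ∀ t ∈ Set.Icc (0 : ℝ) T, |Y (t, ω)| ≤ (n + 1) * M) ∧
    SInfty P 0 T Y ≤ ENNReal.ofReal ((n + 1) * M) :=
  uniform_bound_transfer_general (mΩ := mΩ) P F hFle n hn τ ζ hτm hτ0 hτmono hζm γ hγ T hT Yd
    hYdmeas hYdrc M hM0 hM Y hY

end PaperBSDEJumps
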